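/- arXiv:2503.02954 — 2 statements merged into one kernel-verified Lean document; each statement's English description precedes it below -/
import Mathlib

section
/- Let G = (V, E) be a finite directed acyclic graph and E_new an additional set of directed edges on V (disjoint from E) such that G_new = (V, E ∪ E_new) is also acyclic. Then there exists a strictly positive bid function b : V → ℝ such that for every edge (u, v) ∈ E ∪ E_new, the induced rank satisfies r(u) < r(v), where r(v) = b(v) + Σ_{u ∈ A(v)} b(u) and A(v) is the set of strict ancestors of v in G. -/
open Classical Finset

/-- A directed graph (edge relation `E`) is acyclic iff no vertex reaches itself
by a directed path of positive length. -/
def Acyclic {V : Type*} (E : V → V → Prop) : Prop :=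
  ∀ v, ¬ Relation.TransGen E v v

/-- `u` is a strict ancestor of `v`: `u ≠ v` and there is a directed path from `u` to `v`. -/
def IsAncestor {V : Type*} (E : V → V → Prop) (u v : V) : Prop :=
  u ≠ v ∧ Relation.TransGen E u v

/-- The finite set of strict ancestors of `v`. -/
noncomputable def ancestors {V : Type*} [Fintype V] (E : V → V → Prop) (v : V) : Finset V :=
  Finset.univ.filter (fun u => IsAncestor E u v)

/-- The rank of `v`: its own bid plus the bids of all its strict ancestors. -/
noncomputable def rank {V : Type*} [Fintype V] (E : V → V → Prop) (b : V → ℝ) (v : V) : ℝ :=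
  b v + ∑ u ∈ ancestors E v, b u

/-!
Order the vertices by their depth in the augmented graph, the number of vertices that reach
them there; it strictly increases along every edge of `E ∪ E_new`. Bidding `(n + 1) ^ depth`,
with `n = |V|`, makes the bid of `v` alone exceed the sum of the at most `n` bids making up the
rank of any `u` of smaller depth, since each of those is at most `(n + 1) ^ depth u`.
-/

open Relation

section
variable {V : Type*} [Fintype V]

noncomputable def depth (R : V → V → Prop) (v : V) : ℕ :=
  (Finset.univ.filter fun u => TransGen R u v).card

theorem depth_lt_depth {R : V → V → Prop} (hR : Acyclic R) {u v : V} (huv : TransGen R u v) :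
    depth R u < depth R v := by
  refine Finset.card_lt_card ⟨fun w hw => ?_, fun hsub => ?_⟩
  · simp only [Finset.mem_filter, Finset.mem_univ, true_and] at hw ⊢
    exact hw.trans huv
  · have hu : u ∈ Finset.univ.filter fun w => TransGen R w v := by simpa using huv
    exact hR u (by simpa using hsub hu)

theorem depth_lt_depth_of_mem_ancestors {R S : V → V → Prop} (hRS : R ≤ S)
    (hS : Acyclic S) {u v : V} (hu : u ∈ ancestors R v) : depth S u < depth S v := by
  simp only [ancestors, Finset.mem_filter, Finset.mem_univ, true_and] at hu
  exact depth_lt_depth hS (TransGen.mono hRS _ _ hu.2)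

theorem rank_eq_sum_insert_ancestors (E : V → V → Prop) (b : V → ℝ) (v : V) :
    rank E b v = ∑ w ∈ insert v (ancestors E v), b w := by
  have hv : v ∉ ancestors E v := fun h => (Finset.mem_filter.mp h).2.1 rfl
  rw [Finset.sum_insert hv, rank]

theorem le_rank {E : V → V → Prop} {b : V → ℝ} (hb : ∀ w, 0 ≤ b w) (v : V) :
    b v ≤ rank E b v :=
  le_add_of_nonneg_right (Finset.sum_nonneg fun w _ => hb w)

theorem rank_le_card_mul {E : V → V → Prop} {b : V → ℝ} {v : V} {c : ℝ} (hc0 : 0 ≤ c)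
    (hc : ∀ w ∈ insert v (ancestors E v), b w ≤ c) : rank E b v ≤ Fintype.card V * c := by
  calc rank E b v ≤ (insert v (ancestors E v)).card • c := by
        rw [rank_eq_sum_insert_ancestors]; exact Finset.sum_le_card_nsmul _ _ _ hc
    _ ≤ Fintype.card V * c := by
        rw [nsmul_eq_mul]; gcongr; exact_mod_cast Finset.card_le_univ _

end

theorem exists_bids_for_augmented_dag_general {V : Type*} [Fintype V] (E Enew : V → V → Prop)
    (hacyc' : Acyclic (fun u v => E u v ∨ Enew u v)) :
    ∃ b : V → ℝ, (∀ v, 0 < b v) ∧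
      ∀ u v, (E u v ∨ Enew u v) → rank E b u < rank E b v := by
  set n := Fintype.card V
  set d := depth fun u v => E u v ∨ Enew u v
  have hM : (1 : ℝ) ≤ n + 1 := le_add_of_nonneg_left n.cast_nonneg
  set b : V → ℝ := fun v => ((n : ℝ) + 1) ^ d v
  have hb : ∀ v, 0 < b v := fun v => by positivity
  refine ⟨b, hb, fun u v huv => ?_⟩
  have hbid : ∀ w ∈ insert u (ancestors E u), b w ≤ (n + 1) ^ d u := by
    intro w hw
    rcases Finset.mem_insert.mp hw with rfl | hw
    · rfl
    · exact pow_le_pow_right₀ hM (depth_lt_depth_of_mem_ancestors (fun _ _ => Or.inl) hacyc' hw).le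
  calc rank E b u ≤ n * ((n : ℝ) + 1) ^ d u := rank_le_card_mul (by positivity) hbid
    _ < ((n : ℝ) + 1) ^ (d u + 1) := by rw [pow_succ']; gcongr; linarith
    _ ≤ ((n : ℝ) + 1) ^ d v := pow_le_pow_right₀ hM (depth_lt_depth hacyc' (.single huv))
    _ ≤ rank E b v := le_rank (fun w => (hb w).le) v

theorem exists_bids_for_augmented_dag {V : Type*} [Fintype V] (E Enew : V → V → Prop)
    (hacyc : Acyclic E)
    (hdisj : ∀ u v, ¬ (E u v ∧ Enew u v))
    (hacyc' : Acyclic (fun u v => E u v ∨ Enew u v)) :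
    ∃ b : V → ℝ, (∀ v, 0 < b v) ∧
      ∀ u v, (E u v ∨ Enew u v) → rank E b u < rank E b v :=
  exists_bids_for_augmented_dag_general E Enew hacyc'
end

section
/- Let G = (V, E ∪ E_new) be a finite DAG processed in a topological order, and define bids recursively: when processing vertex v, set b(v) = max(0, max_{j ∈ A'(v)} r(j) − Σ_{k ∈ A(v)} b(k)) + ε for some fixed ε > 0, where A(v) are v's ancestors in (V,E), A'(v) are v's in-neighbors in E_new (all already processed), and r(j) = b(j) + Σ_{k ∈ A(j)} b(k). Then b(v) > 0 for all v and for every edge (w, v) ∈ E_new, r(v) > r(w). -/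
open Classical Finset

theorem recursive_bids_positive_and_increasing {V : Type*} [Fintype V]
    (E Enew : V → V → Prop)
    (hacyc : Acyclic E) (hdisj : ∀ u v, ¬ (E u v ∧ Enew u v))
    (hacyc' : Acyclic (fun u v => E u v ∨ Enew u v))
    (f : V → ℕ) (hf : ∀ u v, (E u v ∨ Enew u v) → f u < f v)
    (ε : ℝ) (hε : 0 < ε) (b : V → ℝ)
    (hb : ∀ v, b v =
      (if h : (Finset.univ.filter (fun j => Enew j v)).Nonempty then
        max 0 ((Finset.univ.filter (fun j => Enew j v)).sup' h (fun j => rank E b j)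
          - ∑ k ∈ ancestors E v, b k)
      else
        max 0 (0 - ∑ k ∈ ancestors E v, b k)) + ε) :
    (∀ v, 0 < b v) ∧ ∀ w v, Enew w v → rank E b w < rank E b v := by
  constructor
  · intro v
    rw [hb v]
    split
    · next h =>
        linarith [le_max_left (0:ℝ)
          (((Finset.univ.filter (fun j => Enew j v)).sup' h (fun j => rank E b j))
            - ∑ k ∈ ancestors E v, b k)]
    · linarith [le_max_left (0:ℝ) (0 - ∑ k ∈ ancestors E v, b k)]
  · intro w v hwv
    have hne : (Finset.univ.filter (fun j => Enew j v)).Nonempty :=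
      ⟨w, by simp [hwv]⟩
    have hbv := hb v
    rw [dif_pos hne] at hbv
    have hsup : rank E b w ≤
        (Finset.univ.filter (fun j => Enew j v)).sup' hne (fun j => rank E b j) :=
      Finset.le_sup' _ (by simp [hwv])
    have hmax := le_max_right (0:ℝ)
      (((Finset.univ.filter (fun j => Enew j v)).sup' hne (fun j => rank E b j))
        - ∑ k ∈ ancestors E v, b k)
    show rank E b w < b v + _
    linarith
end
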